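/- Let G : R_A → R_B be an admissible transformation. Then G is continuous with respect to the topology given by the monomial ideals: for every finitely supported function d : ℕ → ℕ and all α, α′ ∈ R_A, if the monomial z^d divides α − α′, then z^d divides G(α) − G(α′). -/

import Mathlib

/-! An admissible transformation `G : R_A → R_B` between the rings of power series in
countably many variables involving only finitely many variables is continuous with respect to the
topology given by the monomial ideals. -/

noncomputable section

/-- The additive subgroup of `MvPowerSeries σ' R` of series involving only finitely
many variables (for `σ' = ℕ` this is the subring `R_A = ∪_l A[[z₀, …, z_{l−1}]]`
of `A[[z₀, z₁, …]]`, viewed as an additive subgroup). -/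
def finVar (σ' R : Type*) [CommRing R] : AddSubgroup (MvPowerSeries σ' R) where
  carrier := {α | ∃ s : Finset σ', ∀ d : σ' →₀ ℕ, MvPowerSeries.coeff d α ≠ 0 → d.support ⊆ s}
  zero_mem' := ⟨∅, fun d hd => absurd (map_zero (MvPowerSeries.coeff d)) hd⟩
  add_mem' := by
    classical
    rintro a b ⟨s, hs⟩ ⟨t, ht⟩
    refine ⟨s ∪ t, fun d hd => ?_⟩
    by_cases ha : MvPowerSeries.coeff d a = 0
    · have hb : MvPowerSeries.coeff d b ≠ 0 := by
        intro hb
        exact hd (by rw [map_add, ha, hb, add_zero])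
      exact (ht d hb).trans Finset.subset_union_right
    · exact (hs d ha).trans Finset.subset_union_left
  neg_mem' := by
    rintro a ⟨s, hs⟩
    refine ⟨s, fun d hd => hs d fun h => hd ?_⟩
    rw [map_neg, h, neg_zero]

variable {σ' R : Type*} [CommRing R]

/-- Renaming the variables of a multivariate power series along a permutation of the
variable index set:  `z_j ↦ z_{e j}`. -/
def renameVars (e : Equiv.Perm σ') (α : MvPowerSeries σ' R) : MvPowerSeries σ' R :=
  fun d => MvPowerSeries.coeff (Finsupp.equivMapDomain e.symm d) α

/-- The endomorphism of `MvPowerSeries σ' R` substituting `0` for the variable `z_v`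
(and fixing all other variables). -/
def substZeroAt (v : σ') (α : MvPowerSeries σ' R) : MvPowerSeries σ' R :=
  fun d => if d v = 0 then MvPowerSeries.coeff d α else 0

/-- The endomorphism of `MvPowerSeries σ' R` substituting the variable `z_w` for the
variable `z_v` (and fixing all other variables). -/
def substVarAt (v w : σ') (α : MvPowerSeries σ' R) : MvPowerSeries σ' R :=
  fun d =>
    if d v = 0 then
      ∑ a ∈ Finset.range (d w + 1),
        MvPowerSeries.coeff (Finsupp.update (Finsupp.update d w (d w - a)) v a) α
    else 0

-- ===== helper lemmas =====
namespace AdmissibleAux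

open MvPowerSeries Finsupp

lemma coeff_eq (e : ℕ →₀ ℕ) (X : MvPowerSeries ℕ R) : coeff e X = X e := rfl

lemma upd_apply (f : ℕ →₀ ℕ) (i c j : ℕ) :
    (Finsupp.update f i c) j = if j = i then c else f j := by
  rw [Finsupp.coe_update]; exact Function.update_apply ..

lemma coeff_renameVars (σ : Equiv.Perm ℕ) (X : MvPowerSeries ℕ R) (e : ℕ →₀ ℕ) :
    coeff e (renameVars σ X) = coeff (Finsupp.equivMapDomain σ.symm e) X := rfl

lemma coeff_substZeroAt (v : ℕ) (X : MvPowerSeries ℕ R) (e : ℕ →₀ ℕ) :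
    coeff e (substZeroAt v X) = if e v = 0 then coeff e X else 0 := rfl

lemma coeff_substVarAt (v w : ℕ) (X : MvPowerSeries ℕ R) (e : ℕ →₀ ℕ) :
    coeff e (substVarAt v w X) =
      if e v = 0 then
        ∑ a ∈ Finset.range (e w + 1),
          coeff (Finsupp.update (Finsupp.update e w (e w - a)) v a) X
      else 0 := rfl

lemma monomial_one_dvd_iff (d : ℕ →₀ ℕ) (β : MvPowerSeries ℕ R) :
    MvPowerSeries.monomial d (1 : R) ∣ β ↔ ∀ e, ¬ d ≤ e → coeff e β = 0 := by
  constructor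
  · rintro ⟨γ, rfl⟩ e he
    rw [coeff_monomial_mul, if_neg he]
  · intro h
    refine ⟨(show MvPowerSeries ℕ R from fun e => coeff (e + d) β), MvPowerSeries.ext fun e => ?_⟩
    rw [coeff_monomial_mul]
    by_cases hde : d ≤ e
    · rw [if_pos hde, one_mul, coeff_eq]
      show coeff e β = coeff (e - d + d) β
      rw [tsub_add_cancel_of_le hde]
    · rw [h e hde, if_neg hde]

end AdmissibleAux
namespace AdmissibleAux
open MvPowerSeries Finsupp

lemma renameVars_mem (σ : Equiv.Perm ℕ) {α : MvPowerSeries ℕ R} (hα : α ∈ finVar ℕ R) :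
    renameVars σ α ∈ finVar ℕ R := by
  obtain ⟨s, hs⟩ := hα
  refine ⟨s.image σ, fun e he i hi => ?_⟩
  rw [coeff_renameVars] at he
  have h2 : σ.symm i ∈ (Finsupp.equivMapDomain σ.symm e).support := by
    rw [Finsupp.mem_support_iff, Finsupp.equivMapDomain_apply, Equiv.symm_symm,
      Equiv.apply_symm_apply]
    exact Finsupp.mem_support_iff.mp hi
  exact Finset.mem_image.mpr ⟨σ.symm i, hs _ he h2, σ.apply_symm_apply i⟩

lemma substZeroAt_mem (v : ℕ) {α : MvPowerSeries ℕ R} (hα : α ∈ finVar ℕ R) :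
    substZeroAt v α ∈ finVar ℕ R := by
  obtain ⟨s, hs⟩ := hα
  refine ⟨s, fun e he => ?_⟩
  rw [coeff_substZeroAt] at he
  split at he
  · exact hs e he
  · exact absurd rfl he

lemma substVarAt_mem (v w : ℕ) {α : MvPowerSeries ℕ R} (hα : α ∈ finVar ℕ R) :
    substVarAt v w α ∈ finVar ℕ R := by
  classical
  obtain ⟨s, hs⟩ := hα
  refine ⟨insert w s, fun e he => ?_⟩
  rw [coeff_substVarAt] at he
  split at he
  case isFalse => exact absurd rfl he
  case isTrue hev =>
    obtain ⟨a, -, ha⟩ := Finset.exists_ne_zero_of_sum_ne_zero he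
    intro i hi
    rcases eq_or_ne i w with rfl | hiw
    · exact Finset.mem_insert_self _ _
    · refine Finset.mem_insert_of_mem (hs _ ha ?_)
      rw [Finsupp.mem_support_iff, upd_apply, upd_apply, if_neg, if_neg hiw]
      · exact Finsupp.mem_support_iff.mp hi
      · rintro rfl
        exact (Finsupp.mem_support_iff.mp hi) hev

lemma equivMapDomain_update (f : Equiv.Perm ℕ) (e : ℕ →₀ ℕ) (i c : ℕ) :
    Finsupp.equivMapDomain f (Finsupp.update e i c) =
      Finsupp.update (Finsupp.equivMapDomain f e) (f i) c := by
  ext j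
  rw [Finsupp.equivMapDomain_apply, upd_apply, upd_apply, Finsupp.equivMapDomain_apply]
  by_cases h : j = f i
  · rw [if_pos h, if_pos (by rw [h, Equiv.symm_apply_apply])]
  · rw [if_neg h, if_neg fun hc => h (by rw [← hc, Equiv.apply_symm_apply])]

lemma equivMapDomain_symm_inv (σ : Equiv.Perm ℕ) (e : ℕ →₀ ℕ) :
    Finsupp.equivMapDomain (σ⁻¹ : Equiv.Perm ℕ).symm (Finsupp.equivMapDomain σ.symm e) = e := by
  rw [← Finsupp.equivMapDomain_trans]
  show Finsupp.equivMapDomain (σ.symm.trans σ) e = e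
  rw [Equiv.symm_trans_self, Finsupp.equivMapDomain_refl]

lemma substZeroAt_conj (σ : Equiv.Perm ℕ) {v : ℕ} (hv : σ 0 = v) (X : MvPowerSeries ℕ R) :
    substZeroAt v X = renameVars σ (substZeroAt 0 (renameVars σ⁻¹ X)) := by
  funext e
  show coeff e (substZeroAt v X) = coeff e (renameVars σ (substZeroAt 0 (renameVars σ⁻¹ X)))
  rw [coeff_renameVars, coeff_substZeroAt, coeff_substZeroAt,
    coeff_renameVars, equivMapDomain_symm_inv]
  have : (Finsupp.equivMapDomain σ.symm e) 0 = e v := by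
    rw [Finsupp.equivMapDomain_apply, Equiv.symm_symm, hv]
  rw [this]

lemma substVarAt_conj (σ : Equiv.Perm ℕ) {v w : ℕ} (hv : σ 0 = v) (hw : σ 1 = w)
    (X : MvPowerSeries ℕ R) :
    substVarAt v w X = renameVars σ (substVarAt 0 1 (renameVars σ⁻¹ X)) := by
  funext e
  show coeff e (substVarAt v w X) = coeff e (renameVars σ (substVarAt 0 1 (renameVars σ⁻¹ X)))
  rw [coeff_renameVars, coeff_substVarAt, coeff_substVarAt]
  have h0 : (Finsupp.equivMapDomain σ.symm e) 0 = e v := by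
    rw [Finsupp.equivMapDomain_apply, Equiv.symm_symm, hv]
  have h1 : (Finsupp.equivMapDomain σ.symm e) 1 = e w := by
    rw [Finsupp.equivMapDomain_apply, Equiv.symm_symm, hw]
  rw [h0, h1]
  by_cases hev : e v = 0
  · rw [if_pos hev, if_pos hev]
    refine Finset.sum_congr rfl fun a _ => ?_
    rw [coeff_renameVars]
    congr 1
    rw [equivMapDomain_update, equivMapDomain_update, equivMapDomain_symm_inv]
    have hs : ∀ i : ℕ, (σ⁻¹ : Equiv.Perm ℕ).symm i = σ i := fun i => rfl
    rw [hs, hs, hv, hw]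
  · rw [if_neg hev, if_neg hev]

end AdmissibleAux
namespace AdmissibleAux
open MvPowerSeries Finsupp

lemma substVarAt_sub (v w : ℕ) (X Y : MvPowerSeries ℕ R) :
    substVarAt v w (X - Y) = substVarAt v w X - substVarAt v w Y := by
  funext e
  show coeff e (substVarAt v w (X - Y))
      = coeff e (substVarAt v w X) - coeff e (substVarAt v w Y)
  rw [coeff_substVarAt, coeff_substVarAt, coeff_substVarAt]
  split
  · rw [← Finset.sum_sub_distrib]
    exact Finset.sum_congr rfl fun a _ => map_sub _ _ _
  · rw [sub_zero]

lemma substVarAt_eq_self {v w : ℕ} (hvw : v ≠ w) {X : MvPowerSeries ℕ R}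
    (hX : ∀ e : ℕ →₀ ℕ, coeff e X ≠ 0 → e v = 0) :
    substVarAt v w X = X := by
  funext e
  show coeff e (substVarAt v w X) = coeff e X
  rw [coeff_substVarAt]
  by_cases h : e v = 0
  · rw [if_pos h]
    rw [Finset.sum_eq_single 0]
    · rw [Nat.sub_zero, Finsupp.update_self, ← h, Finsupp.update_self]
    · intro a _ ha
      by_contra h'
      apply ha
      have := hX _ h'
      rwa [upd_apply, if_pos rfl] at this
    · intro h0
      exact absurd (Finset.mem_range.2 (Nat.succ_pos _)) h0
  · rw [if_neg h]
    by_contra h'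
    exact h (hX e fun hc => h' hc.symm)

/-- transporting divisibility along the merge `z_w ↦ z_v` -/
lemma dvd_substVarAt {v w : ℕ} (d : ℕ →₀ ℕ) (hdv : 1 ≤ d v) (hdw : d w = 0)
    (X : MvPowerSeries ℕ R)
    (hX : ∀ e, ¬ (Finsupp.update (Finsupp.update d v (d v - 1)) w 1) ≤ e → coeff e X = 0) :
    ∀ e, ¬ d ≤ e → coeff e (substVarAt w v X) = 0 := by
  have hvw : v ≠ w := fun h => by rw [h, hdw] at hdv; exact absurd hdv (by omega)
  intro e he
  rw [coeff_substVarAt]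
  split
  case isFalse => rfl
  case isTrue hew =>
    refine Finset.sum_eq_zero fun a ha => ?_
    refine hX _ fun hle => he ?_
    rw [Finsupp.le_def] at hle ⊢
    intro i
    have h1 := hle v
    have h2 := hle w
    rw [upd_apply, upd_apply, upd_apply, upd_apply] at h1 h2
    rw [if_neg hvw, if_pos rfl, if_neg hvw, if_pos rfl] at h1
    rw [if_pos rfl, if_pos rfl] at h2
    have ha' : a ≤ e v := by simpa using Nat.lt_succ_iff.mp (Finset.mem_range.mp ha)
    rcases eq_or_ne i v with rfl | hiv
    · omega
    rcases eq_or_ne i w with rfl | hiw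
    · omega
    have h3 := hle i
    rw [upd_apply, upd_apply, if_neg hiw, if_neg hiv, upd_apply, upd_apply,
      if_neg hiw, if_neg hiv] at h3
    exact h3

end AdmissibleAux
namespace AdmissibleAux
open MvPowerSeries Finsupp

/-- The split of `β = z^d • γ`, replacing one factor `z_v` by a fresh variable `z_w`. -/
def splitSeries (d : ℕ →₀ ℕ) (v w : ℕ) (β : MvPowerSeries ℕ R) : MvPowerSeries ℕ R :=
  fun e => if (Finsupp.update (Finsupp.update d v (d v - 1)) w 1) ≤ e then
    MvPowerSeries.coeff (e - Finsupp.update (Finsupp.update d v (d v - 1)) w 1 + d) β else 0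

lemma coeff_splitSeries (d : ℕ →₀ ℕ) (v w : ℕ) (β : MvPowerSeries ℕ R) (e : ℕ →₀ ℕ) :
    coeff e (splitSeries d v w β) =
      if (Finsupp.update (Finsupp.update d v (d v - 1)) w 1) ≤ e then
        coeff (e - Finsupp.update (Finsupp.update d v (d v - 1)) w 1 + d) β else 0 := rfl

lemma splitSeries_dvd (d : ℕ →₀ ℕ) (v w : ℕ) (β : MvPowerSeries ℕ R) :
    ∀ e, ¬ (Finsupp.update (Finsupp.update d v (d v - 1)) w 1) ≤ e →
      coeff e (splitSeries d v w β) = 0 := by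
  intro e he
  rw [coeff_splitSeries, if_neg he]

lemma splitSeries_subst {d : ℕ →₀ ℕ} {v w : ℕ} (hvw : v ≠ w) (hdv : 2 ≤ d v) (hdw : d w = 0)
    {β : MvPowerSeries ℕ R}
    (hβw : ∀ e : ℕ →₀ ℕ, coeff e β ≠ 0 → e w = 0)
    (hβd : ∀ e, ¬ d ≤ e → coeff e β = 0) :
    substVarAt w v (splitSeries d v w β) = β := by
  set dt := Finsupp.update (Finsupp.update d v (d v - 1)) w 1 with hdt
  have hdtv : dt v = d v - 1 := by
    rw [hdt, upd_apply, upd_apply, if_neg hvw, if_pos rfl]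
  have hdtw : dt w = 1 := by rw [hdt, upd_apply, if_pos rfl]
  have hdti : ∀ i, i ≠ v → i ≠ w → dt i = d i := fun i hiv hiw => by
    rw [hdt, upd_apply, upd_apply, if_neg hiw, if_neg hiv]
  funext e
  show coeff e (substVarAt w v (splitSeries d v w β)) = coeff e β
  rw [coeff_substVarAt]
  split
  case isFalse hew =>
    by_contra h
    exact hew (hβw e fun hc => h hc.symm)
  case isTrue hew =>
    have hterm : ∀ a, a ≠ 1 →
        coeff (Finsupp.update (Finsupp.update e v (e v - a)) w a) (splitSeries d v w β)
          = 0 := by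
      intro a ha
      set e' := Finsupp.update (Finsupp.update e v (e v - a)) w a with he'
      have he'w : e' w = a := by rw [he', upd_apply, if_pos rfl]
      rw [coeff_splitSeries, ← hdt]
      split
      case isFalse => rfl
      case isTrue hle =>
        have h2 := Finsupp.le_def.mp hle w
        rw [hdtw, he'w] at h2
        have hw1 : (e' - dt + d) w = a - 1 := by
          rw [Finsupp.add_apply, Finsupp.tsub_apply, he'w, hdtw, hdw]
          omega
        by_contra h
        have := hβw _ h
        omega
    by_cases hd : d ≤ e
    · have hdv' : d v ≤ e v := Finsupp.le_def.mp hd v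
      rw [Finset.sum_eq_single 1 (fun a _ ha => hterm a ha)
        (fun h1 => absurd (Finset.mem_range.mpr (by omega)) h1)]
      set e' := Finsupp.update (Finsupp.update e v (e v - 1)) w 1 with he'
      have he'v : e' v = e v - 1 := by
        rw [he', upd_apply, upd_apply, if_neg hvw, if_pos rfl]
      have he'w : e' w = 1 := by rw [he', upd_apply, if_pos rfl]
      have he'i : ∀ i, i ≠ v → i ≠ w → e' i = e i := fun i hiv hiw => by
        rw [he', upd_apply, upd_apply, if_neg hiw, if_neg hiv]
      have hle : dt ≤ e' := by
        rw [Finsupp.le_def]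
        intro i
        rcases eq_or_ne i v with rfl | hiv
        · rw [hdtv, he'v]; omega
        rcases eq_or_ne i w with rfl | hiw
        · rw [hdtw, he'w]
        · rw [hdti i hiv hiw, he'i i hiv hiw]; exact Finsupp.le_def.mp hd i
      rw [coeff_splitSeries, ← hdt, if_pos hle]
      have hEq : e' - dt + d = e := by
        ext i
        rw [Finsupp.add_apply, Finsupp.tsub_apply]
        rcases eq_or_ne i v with rfl | hiv
        · rw [hdtv, he'v]; omega
        rcases eq_or_ne i w with rfl | hiw
        · rw [hdtw, he'w, hdw, hew]
        · rw [hdti i hiv hiw, he'i i hiv hiw]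
          have := Finsupp.le_def.mp hd i; omega
      rw [hEq]
    · rw [hβd e hd]
      refine Finset.sum_eq_zero fun a _ => ?_
      rcases eq_or_ne a 1 with rfl | ha1
      on_goal 2 => exact hterm a ha1
      set e' := Finsupp.update (Finsupp.update e v (e v - 1)) w 1 with he'
      have he'v : e' v = e v - 1 := by
        rw [he', upd_apply, upd_apply, if_neg hvw, if_pos rfl]
      have he'w : e' w = 1 := by rw [he', upd_apply, if_pos rfl]
      have he'i : ∀ i, i ≠ v → i ≠ w → e' i = e i := fun i hiv hiw => by
        rw [he', upd_apply, upd_apply, if_neg hiw, if_neg hiv]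
      rw [coeff_splitSeries, ← hdt]
      split
      next hle =>
        exfalso
        apply hd
        rw [Finsupp.le_def]
        intro i
        have h1 := Finsupp.le_def.mp hle i
        rcases eq_or_ne i v with rfl | hiv
        · rw [hdtv, he'v] at h1; omega
        rcases eq_or_ne i w with rfl | hiw
        · rw [hdw]; exact Nat.zero_le _
        · rwa [hdti i hiv hiw, he'i i hiv hiw] at h1
      next => rfl

lemma splitSeries_mem {d : ℕ →₀ ℕ} (v w : ℕ) {β : MvPowerSeries ℕ R} {t : Finset ℕ}
    (hβ : ∀ e : ℕ →₀ ℕ, coeff e β ≠ 0 → e.support ⊆ t) :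
    splitSeries d v w β ∈ finVar ℕ R := by
  classical
  refine ⟨(t ∪ d.support) ∪ {v, w}, fun e he => ?_⟩
  rw [coeff_splitSeries] at he
  split at he
  case isFalse => exact absurd rfl he
  case isTrue hle =>
    set dt := Finsupp.update (Finsupp.update d v (d v - 1)) w 1 with hdt
    intro i hi
    rcases eq_or_ne i v with rfl | hiv
    · exact Finset.mem_union_right _ (by simp)
    rcases eq_or_ne i w with rfl | hiw
    · exact Finset.mem_union_right _ (by simp)
    have h1 : (e - dt + d) i = e i := by
      have h2 := Finsupp.le_def.mp hle i
      rw [hdt, upd_apply, upd_apply, if_neg hiw, if_neg hiv] at h2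
      rw [Finsupp.add_apply, Finsupp.tsub_apply, hdt, upd_apply, upd_apply,
        if_neg hiw, if_neg hiv]
      omega
    have : i ∈ (e - dt + d).support := by
      rw [Finsupp.mem_support_iff, h1]; exact Finsupp.mem_support_iff.mp hi
    exact Finset.mem_union_left _ (Finset.mem_union_left _ (hβ _ he this))

lemma measure_update {d : ℕ →₀ ℕ} {v w : ℕ} (hdv : 2 ≤ d v) (hdw : d w = 0) :
    ((Finsupp.update (Finsupp.update d v (d v - 1)) w 1).sum fun _ k => k - 1) + 1
      = d.sum fun _ k => k - 1 := by
  classical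
  have hvw : v ≠ w := fun h => by rw [h, hdw] at hdv; omega
  set dt := Finsupp.update (Finsupp.update d v (d v - 1)) w 1 with hdt
  have hdtv : dt v = d v - 1 := by rw [hdt, upd_apply, upd_apply, if_neg hvw, if_pos rfl]
  have hdtw : dt w = 1 := by rw [hdt, upd_apply, if_pos rfl]
  have hdti : ∀ i, i ≠ v → i ≠ w → dt i = d i := fun i hiv hiw => by
    rw [hdt, upd_apply, upd_apply, if_neg hiw, if_neg hiv]
  set T : Finset ℕ := insert w (insert v d.support) with hT
  have hsub1 : dt.support ⊆ T := by
    intro i hi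
    rcases eq_or_ne i v with rfl | hiv
    · exact Finset.mem_insert_of_mem (Finset.mem_insert_self _ _)
    rcases eq_or_ne i w with rfl | hiw
    · exact Finset.mem_insert_self _ _
    · refine Finset.mem_insert_of_mem (Finset.mem_insert_of_mem ?_)
      rw [Finsupp.mem_support_iff, ← hdti i hiv hiw]
      exact Finsupp.mem_support_iff.mp hi
  have hsub2 : d.support ⊆ T :=
    fun i hi => Finset.mem_insert_of_mem (Finset.mem_insert_of_mem hi)
  have h0 : ∀ i ∈ T, (fun (_ : ℕ) (k : ℕ) => k - 1) i 0 = 0 := fun i _ => rfl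
  rw [Finsupp.sum_of_support_subset _ hsub1 _ h0, Finsupp.sum_of_support_subset _ hsub2 _ h0]
  have hvT : v ∈ T := Finset.mem_insert_of_mem (Finset.mem_insert_self _ _)
  have hwTe : w ∈ T.erase v := Finset.mem_erase.mpr ⟨Ne.symm hvw, Finset.mem_insert_self _ _⟩
  rw [← Finset.add_sum_erase _ _ hvT, ← Finset.add_sum_erase _ _ hvT,
    ← Finset.add_sum_erase _ _ hwTe, ← Finset.add_sum_erase _ _ hwTe]
  have hS : (∑ i ∈ (T.erase v).erase w, (fun (_ : ℕ) (k : ℕ) => k - 1) i (dt i))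
      = ∑ i ∈ (T.erase v).erase w, (fun (_ : ℕ) (k : ℕ) => k - 1) i (d i) := by
    refine Finset.sum_congr rfl fun i hi => ?_
    obtain ⟨hiw, hi2⟩ := Finset.mem_erase.mp hi
    obtain ⟨hiv, -⟩ := Finset.mem_erase.mp hi2
    simp only
    rw [hdti i hiv hiw]
  rw [hS]
  simp only
  rw [hdtv, hdtw, hdw]
  omega

end AdmissibleAux
namespace AdmissibleAux
open MvPowerSeries Finsupp

variable {A B : Type*} [CommRing A] [CommRing B]

lemma inv_support_finite {σ : Equiv.Perm ℕ} (h : {x | σ x ≠ x}.Finite) :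
    {x | (σ⁻¹ : Equiv.Perm ℕ) x ≠ x}.Finite := by
  refine h.subset fun x hx => ?_
  simp only [Set.mem_setOf_eq] at hx ⊢
  intro hc
  apply hx
  have h2 : σ⁻¹ (σ x) = x := σ.symm_apply_apply x
  rwa [hc] at h2

lemma swap_finite (a b : ℕ) : {x | Equiv.swap a b x ≠ x}.Finite :=
  (Set.toFinite ({a, b} : Set ℕ)).subset fun x hx => by
    by_contra h
    simp only [Set.mem_insert_iff, Set.mem_singleton_iff, not_or] at h
    exact hx (Equiv.swap_apply_of_ne_of_ne h.1 h.2)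

lemma G_eps (G : finVar ℕ A → finVar ℕ B)
    (hGrename : ∀ σ : Equiv.Perm ℕ, {x | σ x ≠ x}.Finite →
      ∀ α β : finVar ℕ A, (β : MvPowerSeries ℕ A) = renameVars σ ↑α →
        (G β : MvPowerSeries ℕ B) = renameVars σ ↑(G α))
    (hGeps : ∀ α β : finVar ℕ A, (β : MvPowerSeries ℕ A) = substZeroAt 0 ↑α →
        (G β : MvPowerSeries ℕ B) = substZeroAt 0 ↑(G α))
    (v : ℕ) (α β : finVar ℕ A)
    (hβ : (β : MvPowerSeries ℕ A) = substZeroAt v ↑α) :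
    (G β : MvPowerSeries ℕ B) = substZeroAt v ↑(G α) := by
  have hv : Equiv.swap 0 v 0 = v := Equiv.swap_apply_left 0 v
  have hfin : {x | Equiv.swap 0 v x ≠ x}.Finite := swap_finite 0 v
  have hfin' : {x | ((Equiv.swap 0 v)⁻¹ : Equiv.Perm ℕ) x ≠ x}.Finite := inv_support_finite hfin
  have key2 : (G ⟨substZeroAt 0 (renameVars (Equiv.swap 0 v)⁻¹ ↑α),
        substZeroAt_mem 0 (renameVars_mem _ α.2)⟩ : MvPowerSeries ℕ B)
      = substZeroAt 0 ↑(G ⟨renameVars (Equiv.swap 0 v)⁻¹ ↑α, renameVars_mem _ α.2⟩) :=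
    hGeps ⟨renameVars (Equiv.swap 0 v)⁻¹ ↑α, renameVars_mem _ α.2⟩ _ rfl
  have key3 : (G (⟨renameVars (Equiv.swap 0 v)⁻¹ ↑α, renameVars_mem _ α.2⟩ : finVar ℕ A) :
        MvPowerSeries ℕ B)
      = renameVars (Equiv.swap 0 v)⁻¹ ↑(G α) := hGrename _ hfin' α _ rfl
  have key : (G β : MvPowerSeries ℕ B)
      = renameVars (Equiv.swap 0 v) ↑(G ⟨substZeroAt 0 (renameVars (Equiv.swap 0 v)⁻¹ ↑α),
          substZeroAt_mem 0 (renameVars_mem _ α.2)⟩) :=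
    hGrename _ hfin _ β (by rw [hβ, substZeroAt_conj (Equiv.swap 0 v) hv])
  rw [key, key2, key3, ← substZeroAt_conj (Equiv.swap 0 v) hv]

lemma G_delta (G : finVar ℕ A → finVar ℕ B)
    (hGrename : ∀ σ : Equiv.Perm ℕ, {x | σ x ≠ x}.Finite →
      ∀ α β : finVar ℕ A, (β : MvPowerSeries ℕ A) = renameVars σ ↑α →
        (G β : MvPowerSeries ℕ B) = renameVars σ ↑(G α))
    (hGdelta : ∀ α β : finVar ℕ A, (β : MvPowerSeries ℕ A) = substVarAt 0 1 ↑α →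
        (G β : MvPowerSeries ℕ B) = substVarAt 0 1 ↑(G α))
    {v w : ℕ} (hvw : v ≠ w) (α β : finVar ℕ A)
    (hβ : (β : MvPowerSeries ℕ A) = substVarAt v w ↑α) :
    (G β : MvPowerSeries ℕ B) = substVarAt v w ↑(G α) := by
  classical
  set τ := Equiv.swap 0 v with hτ
  set σ := τ.trans (Equiv.swap (τ 1) w) with hσ
  have hτ1 : τ 1 = 0 ∨ τ 1 = 1 := by
    rcases eq_or_ne v 1 with rfl | hv1
    · left; rw [hτ]; exact Equiv.swap_apply_right 0 1
    · right; rw [hτ]; exact Equiv.swap_apply_of_ne_of_ne one_ne_zero (Ne.symm hv1)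
  have hτ1v : τ 1 ≠ v := by
    intro h
    have h2 : τ (τ 1) = τ v := by rw [h]
    rw [hτ, Equiv.swap_apply_self, Equiv.swap_apply_right] at h2
    exact one_ne_zero h2
  have hσ0 : σ 0 = v := by
    rw [hσ, Equiv.trans_apply]
    have hτ0 : τ 0 = v := by rw [hτ]; exact Equiv.swap_apply_left 0 v
    rw [hτ0]
    exact Equiv.swap_apply_of_ne_of_ne (Ne.symm hτ1v) hvw
  have hσ1 : σ 1 = w := by
    rw [hσ, Equiv.trans_apply]
    exact Equiv.swap_apply_left (τ 1) w
  have hfin : {x | σ x ≠ x}.Finite := by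
    refine (Set.toFinite ({0, 1, v, w} : Set ℕ)).subset fun x hx => ?_
    by_contra h
    simp only [Set.mem_insert_iff, Set.mem_singleton_iff, not_or] at h
    obtain ⟨h0, h1, hvx, hwx⟩ := h
    apply hx
    show σ x = x
    rw [hσ, Equiv.trans_apply, hτ, Equiv.swap_apply_of_ne_of_ne h0 hvx]
    refine Equiv.swap_apply_of_ne_of_ne ?_ hwx
    rcases hτ1 with h | h <;> rw [h] <;> assumption
  have hfin' : {x | (σ⁻¹ : Equiv.Perm ℕ) x ≠ x}.Finite := inv_support_finite hfin
  have key2 : (G ⟨substVarAt 0 1 (renameVars σ⁻¹ ↑α),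
        substVarAt_mem 0 1 (renameVars_mem _ α.2)⟩ : MvPowerSeries ℕ B)
      = substVarAt 0 1 ↑(G ⟨renameVars σ⁻¹ ↑α, renameVars_mem _ α.2⟩) :=
    hGdelta ⟨renameVars σ⁻¹ ↑α, renameVars_mem _ α.2⟩ _ rfl
  have key3 : (G (⟨renameVars σ⁻¹ ↑α, renameVars_mem _ α.2⟩ : finVar ℕ A) :
        MvPowerSeries ℕ B)
      = renameVars σ⁻¹ ↑(G α) := hGrename _ hfin' α _ rfl
  have key : (G β : MvPowerSeries ℕ B)
      = renameVars σ ↑(G ⟨substVarAt 0 1 (renameVars σ⁻¹ ↑α),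
          substVarAt_mem 0 1 (renameVars_mem _ α.2)⟩) :=
    hGrename _ hfin _ β (by rw [hβ, substVarAt_conj σ hσ0 hσ1])
  rw [key, key2, key3, ← substVarAt_conj σ hσ0 hσ1]

end AdmissibleAux

/-- An admissible transformation `G : R_A → R_B` is continuous with respect to the
topology given by the monomial ideals: if the monomial `z^d` divides `α − α′`,
then `z^d` divides `G α − G α′`. -/
theorem admissible_continuous_monomial_ideals
    {A B : Type*} [CommRing A] [CommRing B]
    (G : finVar ℕ A → finVar ℕ B)
    (hG0 : G 0 = 0)
    (hGrename : ∀ σ : Equiv.Perm ℕ, {x | σ x ≠ x}.Finite →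
      ∀ α β : finVar ℕ A, (β : MvPowerSeries ℕ A) = renameVars σ ↑α →
        (G β : MvPowerSeries ℕ B) = renameVars σ ↑(G α))
    (hGeps : ∀ α β : finVar ℕ A, (β : MvPowerSeries ℕ A) = substZeroAt 0 ↑α →
        (G β : MvPowerSeries ℕ B) = substZeroAt 0 ↑(G α))
    (hGdelta : ∀ α β : finVar ℕ A, (β : MvPowerSeries ℕ A) = substVarAt 0 1 ↑α →
        (G β : MvPowerSeries ℕ B) = substVarAt 0 1 ↑(G α))
    (d : ℕ →₀ ℕ) (α α' : finVar ℕ A)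
    (hdvd : MvPowerSeries.monomial d (1 : A) ∣ ((α : MvPowerSeries ℕ A) - ↑α')) :
    MvPowerSeries.monomial d (1 : B) ∣ ((G α : MvPowerSeries ℕ B) - ↑(G α')) := by
  classical
  rw [AdmissibleAux.monomial_one_dvd_iff] at hdvd ⊢
  suffices H : ∀ (n : ℕ) (d : ℕ →₀ ℕ), (d.sum fun _ k => k - 1) = n →
      ∀ α α' : finVar ℕ A,
      (∀ e, ¬ d ≤ e → MvPowerSeries.coeff e ((α : MvPowerSeries ℕ A) - (α' : MvPowerSeries ℕ A)) = 0) →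
      ∀ e, ¬ d ≤ e → MvPowerSeries.coeff e ((G α : MvPowerSeries ℕ B) - (G α' : MvPowerSeries ℕ B)) = 0 by
    exact H _ d rfl α α' hdvd
  clear hdvd d α α'
  intro n
  induction n using Nat.strong_induction_on with
  | _ n IH =>
  intro d hdn α α' hAB
  by_cases hsq : ∀ u, d u ≤ 1
  case pos =>
    intro e he
    rw [Finsupp.le_def, not_forall] at he
    obtain ⟨u, hu⟩ := he
    have hdu : d u = 1 := by have := hsq u; omega
    have heu : e u = 0 := by omega
    have hzz : substZeroAt u (α : MvPowerSeries ℕ A) = substZeroAt u ↑α' := by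
      funext e'
      show MvPowerSeries.coeff e' (substZeroAt u (α : MvPowerSeries ℕ A))
        = MvPowerSeries.coeff e' (substZeroAt u (α' : MvPowerSeries ℕ A))
      rw [AdmissibleAux.coeff_substZeroAt, AdmissibleAux.coeff_substZeroAt]
      split
      next he'u =>
        have h0 : ¬ d ≤ e' := by
          rw [Finsupp.le_def, not_forall]; exact ⟨u, by omega⟩
        have h1 := hAB e' h0
        rw [map_sub, sub_eq_zero] at h1
        exact h1
      next => rfl
    have k1 : (G ⟨substZeroAt u ↑α, AdmissibleAux.substZeroAt_mem u α.2⟩ : MvPowerSeries ℕ B)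
        = substZeroAt u ↑(G α) := AdmissibleAux.G_eps G hGrename hGeps u α _ rfl
    have k2 : (G ⟨substZeroAt u ↑α, AdmissibleAux.substZeroAt_mem u α.2⟩ : MvPowerSeries ℕ B)
        = substZeroAt u ↑(G α') :=
      AdmissibleAux.G_eps G hGrename hGeps u α'
        ⟨substZeroAt u ↑α, AdmissibleAux.substZeroAt_mem u α.2⟩ hzz
    have k3 := k1.symm.trans k2
    have hc : MvPowerSeries.coeff e (substZeroAt u ((G α : MvPowerSeries ℕ B)))
        = MvPowerSeries.coeff e (substZeroAt u ↑(G α')) := by rw [k3]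
    rw [AdmissibleAux.coeff_substZeroAt, AdmissibleAux.coeff_substZeroAt,
      if_pos heu, if_pos heu] at hc
    rw [map_sub, hc, sub_self]
  case neg =>
    push_neg at hsq
    obtain ⟨v, hv⟩ := hsq
    have hdv : 2 ≤ d v := hv
    obtain ⟨sa, hsa⟩ := α.2
    obtain ⟨sa', hsa'⟩ := α'.2
    obtain ⟨w, hw⟩ := Infinite.exists_notMem_finset (d.support ∪ sa ∪ sa')
    have hwd : d w = 0 := by
      by_contra h
      exact hw (Finset.mem_union_left _
        (Finset.mem_union_left _ (Finsupp.mem_support_iff.mpr h)))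
    have hvw : v ≠ w := by rintro rfl; omega
    set β : MvPowerSeries ℕ A := ↑α - ↑α' with hβ
    have hβsupp : ∀ e : ℕ →₀ ℕ, MvPowerSeries.coeff e β ≠ 0 → e.support ⊆ sa ∪ sa' := by
      intro e he
      by_cases h1 : MvPowerSeries.coeff e (α : MvPowerSeries ℕ A) = 0
      · have h2 : MvPowerSeries.coeff e (α' : MvPowerSeries ℕ A) ≠ 0 := by
          intro h2; rw [hβ, map_sub, h1, h2, sub_zero] at he; exact he rfl
        exact (hsa' e h2).trans Finset.subset_union_right
      · exact (hsa e h1).trans Finset.subset_union_left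
    have hβw : ∀ e : ℕ →₀ ℕ, MvPowerSeries.coeff e β ≠ 0 → e w = 0 := by
      intro e he
      by_contra h3
      rcases Finset.mem_union.mp (hβsupp e he (Finsupp.mem_support_iff.mpr h3)) with h4 | h4
      · exact hw (Finset.mem_union_left _ (Finset.mem_union_right _ h4))
      · exact hw (Finset.mem_union_right _ h4)
    have hβd : ∀ e, ¬ d ≤ e → MvPowerSeries.coeff e β = 0 := hAB
    have hsmem : AdmissibleAux.splitSeries d v w β ∈ finVar ℕ A :=
      AdmissibleAux.splitSeries_mem v w hβsupp
    set αt : finVar ℕ A := α' + ⟨AdmissibleAux.splitSeries d v w β, hsmem⟩ with hαt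
    have hαts : (αt : MvPowerSeries ℕ A) = ↑α' + AdmissibleAux.splitSeries d v w β := rfl
    have h2 : (αt : MvPowerSeries ℕ A) - ↑α' = AdmissibleAux.splitSeries d v w β := by
      rw [hαts]; ring
    have hsubst_s : substVarAt w v (AdmissibleAux.splitSeries d v w β) = β :=
      AdmissibleAux.splitSeries_subst hvw hdv hwd hβw hβd
    have hα'fix : substVarAt w v ((α' : MvPowerSeries ℕ A)) = ↑α' :=
      AdmissibleAux.substVarAt_eq_self (Ne.symm hvw) (fun e he => by
        by_contra h3
        exact hw (Finset.mem_union_right _ ((hsa' e he) (Finsupp.mem_support_iff.mpr h3))))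
    have hαtα : substVarAt w v ((αt : MvPowerSeries ℕ A)) = ↑α := by
      have h1 : substVarAt w v ((αt : MvPowerSeries ℕ A) - (α' : MvPowerSeries ℕ A))
          = substVarAt w v (αt : MvPowerSeries ℕ A) - substVarAt w v (α' : MvPowerSeries ℕ A) :=
        AdmissibleAux.substVarAt_sub w v _ _
      rw [h2, hsubst_s, hα'fix, hβ] at h1
      exact (sub_left_inj.mp h1).symm
    have hGα : (G α : MvPowerSeries ℕ B) = substVarAt w v ↑(G αt) :=
      AdmissibleAux.G_delta G hGrename hGdelta (Ne.symm hvw) αt α hαtα.symm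
    have hGα' : (G α' : MvPowerSeries ℕ B) = substVarAt w v ↑(G α') :=
      AdmissibleAux.G_delta G hGrename hGdelta (Ne.symm hvw) α' α' hα'fix.symm
    have hmeas :
        (((Finsupp.update (Finsupp.update d v (d v - 1)) w 1)).sum fun _ k => k - 1) + 1
          = d.sum fun _ k => k - 1 := AdmissibleAux.measure_update hdv hwd
    have hlt : (((Finsupp.update (Finsupp.update d v (d v - 1)) w 1)).sum fun _ k => k - 1)
        < n := by omega
    have hstep : ∀ e, ¬ (Finsupp.update (Finsupp.update d v (d v - 1)) w 1) ≤ e →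
        MvPowerSeries.coeff e ((αt : MvPowerSeries ℕ A) - (α' : MvPowerSeries ℕ A)) = 0 := by
      intro e he
      rw [h2]
      exact AdmissibleAux.splitSeries_dvd d v w β e he
    have hIH := IH _ hlt (Finsupp.update (Finsupp.update d v (d v - 1)) w 1) rfl αt α' hstep
    intro e he
    have hX := AdmissibleAux.dvd_substVarAt (v := v) (w := w) d (by omega) hwd
      ((G αt : MvPowerSeries ℕ B) - ((G α' : MvPowerSeries ℕ B))) hIH e he
    rw [AdmissibleAux.substVarAt_sub, ← hGα, ← hGα'] at hX
    exact hX
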